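/- arXiv:0906.5416 — 5 statements merged into one kernel-verified Lean document; each statement's English description precedes it below -/
import Mathlib

section
/- Let U₁ and U₂ be unitary matrices on the same finite-dimensional complex Hilbert space such that α_max(U₁) + α_max(U₂) < π and α_min(U₁) + α_min(U₂) > −π. Then α_max(U₁U₂) ≤ α_max(U₁) + α_max(U₂) and α_min(U₁U₂) ≥ α_min(U₁) + α_min(U₂). -/
open Matrix
open scoped Matrix.Norms.L2Operator Kronecker ComplexOrder

noncomputable section

/-- Maximum argument (taken in `(-π, π]`) of the eigenvalues of a matrix. -/
noncomputable def argMaxSpec {n : ℕ} (U : Matrix (Fin n) (Fin n) ℂ) : ℝ :=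
  sSup (Complex.arg '' spectrum ℂ U)

/-- Minimum argument (taken in `(-π, π]`) of the eigenvalues of a matrix. -/
noncomputable def argMinSpec {n : ℕ} (U : Matrix (Fin n) (Fin n) ℂ) : ℝ :=
  sInf (Complex.arg '' spectrum ℂ U)

/-- Length `α̃(U)` of the shortest arc of the unit circle containing all eigenvalues of `U`. -/
noncomputable def arcLength {n : ℕ} (U : Matrix (Fin n) (Fin n) ℂ) : ℝ :=
  sInf { L : ℝ | 0 ≤ L ∧ ∃ θ : ℝ, ∀ z ∈ spectrum ℂ U, ∃ φ : ℝ,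
    θ ≤ φ ∧ φ ≤ θ + L ∧ z = Complex.exp (φ * Complex.I) }

/-- The phase range `α(U) = min {π, α̃(U)}`. -/
noncomputable def phaseRange {n : ℕ} (U : Matrix (Fin n) (Fin n) ℂ) : ℝ :=
  min Real.pi (arcLength U)

/-!
Let `U₁ U₂ v = λ v` with `v ≠ 0`. Then `U₂ v = λ U₁ᴴ v`, so `⟪v, U₂ v⟫ = λ · conj ⟪v, U₁ v⟫`
lies in the numerical ranges of both `λ U₁ᴴ` and `U₂`. For a normal matrix, every half-plane
`{w | c ≤ re (μ w)}` containing the spectrum also contains the numerical range (the matrix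
`μ A + conj μ Aᴴ - 2c` is positive by the functional calculus). If `arg λ` lay outside
`[α_min U₁ + α_min U₂, α_max U₁ + α_max U₂]`, the arcs carrying the spectra `λ · conj (σ U₁)` of
`λ U₁ᴴ` and `σ U₂` of `U₂` would be disjoint, hence separated by a line, which leaves no room
for `⟪v, U₂ v⟫`.
-/

open Real

namespace Complex

lemma cos_le_re_exp_mul_of_abs_arg_sub_le {z : ℂ} (hz : ‖z‖ = 1) {φ R : ℝ}
    (h : |arg z - φ| ≤ R) (hR : R ≤ π) : Real.cos R ≤ (exp (-φ * I) * z).re := by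
  conv_rhs => rw [← norm_mul_exp_arg_mul_I z, hz, ofReal_one, one_mul, ← exp_add,
    show -(φ : ℂ) * I + arg z * I = ((arg z - φ : ℝ) : ℂ) * I by push_cast; ring,
    exp_ofReal_mul_I_re, ← Real.cos_abs]
  exact Real.cos_le_cos_of_nonneg_of_le_pi (abs_nonneg _) hR h

lemma exists_exp_neg_mul_I_eq_neg {θ s S : ℝ} (hθ : θ ∈ Set.Ioc (-π) π)
    (hθs : θ ∉ Set.Icc s S) (hs : -π < s) (hS : S < π) (c : ℝ) :
    ∃ ω : ℝ, exp (-ω * I) = -exp (-(θ - c : ℝ) * I) ∧ ω ∈ Set.Ioo (S - c - π) (s - c + π) := by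
  rcases not_and_or.mp hθs with hlo | hhi
  · refine ⟨θ - c + π, ?_, by linarith [hθ.1], by linarith⟩
    rw [← exp_sub_pi_mul_I]; push_cast; ring_nf
  · refine ⟨θ - c - π, ?_, by linarith, by linarith [hθ.2]⟩
    rw [← exp_add_pi_mul_I]; push_cast; ring_nf

end Complex

namespace Matrix

variable {ι : Type*} [Fintype ι]

lemma star_dotProduct_conjTranspose_mulVec (A : Matrix ι ι ℂ) (v : ι → ℂ) :
    star v ⬝ᵥ (Aᴴ *ᵥ v) = star (star v ⬝ᵥ (A *ᵥ v)) := by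
  rw [star_dotProduct, star_mulVec, dotProduct_mulVec, conjTranspose_conjTranspose]

variable [DecidableEq ι]

lemma exists_mulVec_eq_smul_of_mem_spectrum {K : Type*} [Field K] {A : Matrix ι ι K} {z : K}
    (hz : z ∈ spectrum K A) : ∃ v ≠ 0, A *ᵥ v = z • v := by
  rw [← spectrum_toLin', ← Module.End.hasEigenvalue_iff_mem_spectrum] at hz
  obtain ⟨v, hv⟩ := hz.exists_hasEigenvector
  exact ⟨v, hv.2, hv.apply_eq_smul⟩

lemma star_dotProduct_mulVec_eq_mul_star {U₁ U₂ : Matrix ι ι ℂ}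
    (hU₁ : U₁ ∈ unitaryGroup ι ℂ) {v : ι → ℂ} {z : ℂ} (hv : (U₁ * U₂) *ᵥ v = z • v) :
    star v ⬝ᵥ (U₂ *ᵥ v) = z * star (star v ⬝ᵥ (U₁ *ᵥ v)) := by
  have hU₂v : U₂ *ᵥ v = z • (U₁ᴴ *ᵥ v) := by
    rw [← mulVec_smul, ← hv, mulVec_mulVec, ← Matrix.mul_assoc, ← star_eq_conjTranspose,
      Unitary.star_mul_self_of_mem hU₁, Matrix.one_mul]
  rw [hU₂v, dotProduct_smul, smul_eq_mul, star_dotProduct_conjTranspose_mulVec]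

open Complex in
lemma exp_mul_star_dotProduct_mulVec_eq_star {U₁ U₂ : Matrix ι ι ℂ}
    (hU₁ : U₁ ∈ unitaryGroup ι ℂ) {v : ι → ℂ} {z : ℂ} (hv : (U₁ * U₂) *ᵥ v = z • v)
    (hz : ‖z‖ = 1) (c : ℝ) :
    exp (-(arg z - c : ℝ) * I) * (star v ⬝ᵥ (U₂ *ᵥ v))
      = star (exp (-c * I) * (star v ⬝ᵥ (U₁ *ᵥ v))) := by
  have hz' : exp (arg z * I) = z := by simpa [hz] using norm_mul_exp_arg_mul_I z
  have hexp : exp (-(arg z - c : ℝ) * I) * z = exp (c * I) :=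
    calc exp (-(arg z - c : ℝ) * I) * z = exp (-(arg z - c : ℝ) * I) * exp (arg z * I) := by
          rw [hz']
      _ = exp (c * I) := by rw [← Complex.exp_add]; push_cast; ring_nf
  have hstar : star (exp (-c * I)) = exp (c * I) := by
    rw [Complex.star_def, ← Complex.exp_conj]; simp
  rw [star_dotProduct_mulVec_eq_mul_star hU₁ hv, ← mul_assoc, hexp, star_mul', hstar]

open scoped MatrixOrder in
lemma mul_re_le_re_mul_dotProduct_mulVec {A : Matrix ι ι ℂ} [IsStarNormal A]
    {μ : ℂ} {c : ℝ} (h : ∀ z ∈ spectrum ℂ A, c ≤ (μ * z).re) (v : ι → ℂ) :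
    c * (star v ⬝ᵥ v).re ≤ (μ * (star v ⬝ᵥ (A *ᵥ v))).re := by
  have hcfc : cfc (fun z => μ * z + star μ * star z - (2 * c : ℂ)) A
      = μ • A + star μ • Aᴴ - (2 * c : ℂ) • 1 := by
    rw [cfc_sub (fun z => μ * z + star μ * star z) (fun _ => 2 * (c : ℂ)) A,
      cfc_add A (fun z => μ * z) (fun z => star μ * star z), cfc_const_mul_id _ A,
      cfc_const_mul _ (fun z => star z) A, cfc_star_id (a := A), cfc_const _ A,
      Algebra.algebraMap_eq_smul_one, star_eq_conjTranspose]
  have hnonneg : 0 ≤ μ • A + star μ • Aᴴ - (2 * c : ℂ) • 1 :=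
    hcfc ▸ cfc_nonneg fun z hz => by
      rw [← star_mul', Complex.star_def, Complex.add_conj]
      exact_mod_cast (by linarith [h z hz] : 0 ≤ 2 * (μ * z).re - 2 * c)
  have hq := (nonneg_iff_posSemidef.mp hnonneg).dotProduct_mulVec_nonneg v
  rw [sub_mulVec, add_mulVec, smul_mulVec, smul_mulVec, smul_mulVec, one_mulVec,
    dotProduct_sub, dotProduct_add, dotProduct_smul, dotProduct_smul, dotProduct_smul,
    star_dotProduct_conjTranspose_mulVec, smul_eq_mul, smul_eq_mul, smul_eq_mul, ← star_mul',
    Complex.star_def, Complex.add_conj] at hq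
  have hre := (Complex.nonneg_iff.mp hq).1
  simp only [Complex.sub_re, Complex.mul_re, Complex.re_ofNat, Complex.im_ofNat,
    Complex.mul_im, Complex.ofReal_re, Complex.ofReal_im] at hre ⊢
  linarith

open Complex in
theorem arg_mem_Icc_of_mem_spectrum_mul {U₁ U₂ : Matrix ι ι ℂ} (hU₁ : U₁ ∈ unitaryGroup ι ℂ)
    (hU₂ : U₂ ∈ unitaryGroup ι ℂ) {a₁ A₁ a₂ A₂ : ℝ}
    (hσ₁ : ∀ z ∈ spectrum ℂ U₁, arg z ∈ Set.Icc a₁ A₁)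
    (hσ₂ : ∀ z ∈ spectrum ℂ U₂, arg z ∈ Set.Icc a₂ A₂) (ha₁ : a₁ ≤ A₁) (ha₂ : a₂ ≤ A₂)
    (hA : A₁ + A₂ < π) (ha : -π < a₁ + a₂) {z : ℂ} (hz : z ∈ spectrum ℂ (U₁ * U₂)) :
    arg z ∈ Set.Icc (a₁ + a₂) (A₁ + A₂) := by
  obtain ⟨v, hv0, hv⟩ := exists_mulVec_eq_smul_of_mem_spectrum hz
  have hN : 0 < (star v ⬝ᵥ v).re := (pos_iff.mp (dotProduct_star_self_pos_iff.mpr hv0)).1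
  have hz1 : ‖z‖ = 1 := spectrum.norm_eq_one_of_unitary (mul_mem hU₁ hU₂) hz
  have := isStarNormal_of_mem_unitary hU₁
  have := isStarNormal_of_mem_unitary hU₂
  set c₁ := (a₁ + A₁) / 2 with hc₁
  set r₁ := (A₁ - a₁) / 2 with hr₁
  have hs₁ : Real.cos r₁ * (star v ⬝ᵥ v).re ≤ (exp (-c₁ * I) * (star v ⬝ᵥ (U₁ *ᵥ v))).re :=
    mul_re_le_re_mul_dotProduct_mulVec (A := U₁) (fun w hw =>
      cos_le_re_exp_mul_of_abs_arg_sub_le (spectrum.norm_eq_one_of_unitary hU₁ hw)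
        (abs_le.2 ⟨by linarith [(hσ₁ w hw).1], by linarith [(hσ₁ w hw).2]⟩) (by linarith)) v
  by_contra hout
  -- `ω` is antipodal to `arg z - c₁`, and the arc `[a₂, A₂]` stays within `π - r₁` of it.
  obtain ⟨ω, hω, hωlo, hωhi⟩ := exists_exp_neg_mul_I_eq_neg ⟨neg_pi_lt_arg z, arg_le_pi z⟩ hout
    ha hA c₁
  set R := max (A₂ - ω) (ω - a₂)
  have hR : 0 ≤ R := le_max_iff.2 (by by_contra! h; linarith [h.1, h.2])
  have hs₂ : Real.cos R * (star v ⬝ᵥ v).re ≤ (exp (-ω * I) * (star v ⬝ᵥ (U₂ *ᵥ v))).re :=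
    mul_re_le_re_mul_dotProduct_mulVec (A := U₂) (fun w hw =>
      cos_le_re_exp_mul_of_abs_arg_sub_le (spectrum.norm_eq_one_of_unitary hU₂ hw)
        (abs_le.2 ⟨by linarith [(hσ₂ w hw).1, le_max_right (A₂ - ω) (ω - a₂)],
          by linarith [(hσ₂ w hw).2, le_max_left (A₂ - ω) (ω - a₂)]⟩)
        (max_le (by linarith) (by linarith))) v
  have hrel : (exp (-ω * I) * (star v ⬝ᵥ (U₂ *ᵥ v))).re
      = -(exp (-c₁ * I) * (star v ⬝ᵥ (U₁ *ᵥ v))).re := by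
    rw [hω, neg_mul, exp_mul_star_dotProduct_mulVec_eq_star hU₁ hv hz1, neg_re, Complex.star_def,
      conj_re]
  have hcos : -Real.cos r₁ < Real.cos R := by
    rw [← Real.cos_pi_sub]
    exact Real.cos_lt_cos_of_nonneg_of_le_pi hR (by linarith) (max_lt (by linarith) (by linarith))
  linarith [mul_lt_mul_of_pos_right hcos hN]

end Matrix

lemma arg_mem_Icc_argMinSpec_argMaxSpec {n : ℕ} {M : Matrix (Fin n) (Fin n) ℂ} {z : ℂ}
    (hz : z ∈ spectrum ℂ M) : Complex.arg z ∈ Set.Icc (argMinSpec M) (argMaxSpec M) :=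
  have hfin := (finite_spectrum M).image Complex.arg
  ⟨csInf_le hfin.bddBelow ⟨z, hz, rfl⟩, le_csSup hfin.bddAbove ⟨z, hz, rfl⟩⟩

lemma argMinSpec_le_argMaxSpec {n : ℕ} [Nonempty (Fin n)] (M : Matrix (Fin n) (Fin n) ℂ) :
    argMinSpec M ≤ argMaxSpec M :=
  have ⟨_, hz⟩ := spectrum.nonempty M
  Set.nonempty_Icc.mp ⟨_, arg_mem_Icc_argMinSpec_argMaxSpec hz⟩

/-- Subadditivity of `α_max` / superadditivity of `α_min` under products of unitaries. -/
theorem argMax_argMin_mul {n : ℕ} (U₁ U₂ : Matrix (Fin n) (Fin n) ℂ)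
    (hU₁ : U₁ ∈ Matrix.unitaryGroup (Fin n) ℂ) (hU₂ : U₂ ∈ Matrix.unitaryGroup (Fin n) ℂ)
    (hmax : argMaxSpec U₁ + argMaxSpec U₂ < Real.pi)
    (hmin : argMinSpec U₁ + argMinSpec U₂ > -Real.pi) :
    argMaxSpec (U₁ * U₂) ≤ argMaxSpec U₁ + argMaxSpec U₂ ∧
      argMinSpec (U₁ * U₂) ≥ argMinSpec U₁ + argMinSpec U₂ := by
  rcases isEmpty_or_nonempty (Fin n) with hn | hn
  · simp [argMaxSpec, argMinSpec, spectrum.of_subsingleton]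
  have hprod := fun {z} (hz : z ∈ spectrum ℂ (U₁ * U₂)) =>
    arg_mem_Icc_of_mem_spectrum_mul hU₁ hU₂
      (fun _ => arg_mem_Icc_argMinSpec_argMaxSpec) (fun _ => arg_mem_Icc_argMinSpec_argMaxSpec)
      (argMinSpec_le_argMaxSpec U₁) (argMinSpec_le_argMaxSpec U₂) hmax hmin hz
  have hne := (spectrum.nonempty (U₁ * U₂)).image Complex.arg
  exact ⟨csSup_le hne (Set.forall_mem_image.2 fun _ hz => (hprod hz).2),
    le_csInf hne (Set.forall_mem_image.2 fun _ hz => (hprod hz).1)⟩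
end
end

section
/- For any unitary matrices U₁, U₂, U₃ on the same finite-dimensional complex Hilbert space, α(U₁† U₃) ≤ α(U₁† U₂) + α(U₂† U₃); that is, the quantity α(U, V) := α(U† V) satisfies the triangle inequality. -/
open Matrix
open scoped Matrix.Norms.L2Operator Kronecker ComplexOrder

noncomputable section

/-!
If the spectrum of a normal matrix `M` lies on an arc of length `s < π`, then every value
`⟨x, M x⟩` with `x ≠ 0` lies in the sector of the plane spanned by that arc: positivity of the
continuous functional calculus carries each half-plane containing the spectrum over to these
values. For unitaries `A`, `B` and an eigenvector `x` of `A B` with eigenvalue `μ`, one has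
`⟨x, B x⟩ = μ · conj ⟨x, A x⟩`, so the argument of `μ` is a sum of arguments taken from the two
sectors, and the spectrum of `A B` lies on the sum of the two arcs as long as their total length
is below `π`. Applied to `A = U₁† U₂` and `B = U₂† U₃` with nearly optimal arcs this gives the
inequality when `α(U₁† U₂) + α(U₂† U₃) < π`; otherwise it holds because `α ≤ π`.
-/

open Complex Set
open scoped Real

namespace PhaseRange

def arc (θ s : ℝ) : Set ℂ := (fun φ : ℝ => exp (φ * I)) '' Icc θ (θ + s)

def sector (θ s : ℝ) : Set ℂ := {w | ∃ r : ℝ, 0 < r ∧ ∃ ψ ∈ Icc θ (θ + s), w = r * exp (ψ * I)}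

lemma ne_zero_of_mem_sector {θ s : ℝ} {w : ℂ} (hw : w ∈ sector θ s) : w ≠ 0 := by
  obtain ⟨r, hr, ψ, -, rfl⟩ := hw
  exact mul_ne_zero (ofReal_ne_zero.mpr hr.ne') (exp_ne_zero _)

lemma mul_mem_sector {θ₁ θ₂ s t : ℝ} {w₁ w₂ : ℂ} (h₁ : w₁ ∈ sector θ₁ s) (h₂ : w₂ ∈ sector θ₂ t) :
    w₁ * w₂ ∈ sector (θ₁ + θ₂) (s + t) := by
  obtain ⟨r₁, hr₁, ψ₁, ⟨hψ₁, hψ₁'⟩, rfl⟩ := h₁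
  obtain ⟨r₂, hr₂, ψ₂, ⟨hψ₂, hψ₂'⟩, rfl⟩ := h₂
  refine ⟨r₁ * r₂, mul_pos hr₁ hr₂, ψ₁ + ψ₂, ⟨by linarith, by linarith⟩, ?_⟩
  push_cast
  rw [add_mul, exp_add]
  ring

lemma ofReal_mul_mem_sector {θ s a : ℝ} {w : ℂ} (ha : 0 < a) (hw : w ∈ sector θ s) :
    (a : ℂ) * w ∈ sector θ s := by
  obtain ⟨r, hr, ψ, hψ, rfl⟩ := hw
  exact ⟨a * r, mul_pos ha hr, ψ, hψ, by push_cast; ring⟩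

lemma inv_star_mem_sector {θ s : ℝ} {w : ℂ} (hw : w ∈ sector θ s) : (star w)⁻¹ ∈ sector θ s := by
  have hw0 := ne_zero_of_mem_sector hw
  rw [inv_def, star_def, conj_conj, normSq_conj, mul_comm]
  exact ofReal_mul_mem_sector (inv_pos.mpr (normSq_pos.mpr hw0)) hw

lemma mem_arc_of_mem_sector {θ s : ℝ} {w : ℂ} (hw : w ∈ sector θ s) (h1 : ‖w‖ = 1) :
    w ∈ arc θ s := by
  obtain ⟨r, hr, ψ, hψ, rfl⟩ := hw
  have : r = 1 := by simpa [norm_exp_ofReal_mul_I, abs_of_pos hr] using h1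
  exact ⟨ψ, hψ, by simp [this]⟩

lemma exists_eq_norm_mul_exp_add_mem_Ioc (w : ℂ) (γ : ℝ) :
    ∃ δ ∈ Ioc (-π) π, w = ‖w‖ * exp ((γ + δ : ℝ) * I) := by
  set u := exp ((-γ : ℝ) * I) * w
  refine ⟨arg u, ⟨neg_pi_lt_arg u, arg_le_pi u⟩, ?_⟩
  have hu : ‖u‖ = ‖w‖ := by rw [norm_mul, norm_exp_ofReal_mul_I, one_mul]
  calc w = exp ((γ : ℝ) * I) * u := by
        rw [← mul_assoc, ← exp_add]; push_cast; simp
    _ = exp ((γ : ℝ) * I) * (‖w‖ * exp (arg u * I)) := by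
        rw [← hu, norm_mul_exp_arg_mul_I u]
    _ = _ := by rw [ofReal_add, add_mul, exp_add]; ring

lemma re_exp_mul_exp (a b : ℝ) : (exp (a * I) * exp (b * I)).re = Real.cos (a + b) := by
  rw [← exp_add, ← add_mul, ← ofReal_add, exp_ofReal_mul_I_re]

lemma abs_le_of_cos_pos_of_sin_nonneg {δ h : ℝ} (hδ : δ ∈ Ioc (-π) π) (hh₀ : 0 ≤ h) (hh : h < π / 2)
    (hcos : 0 < Real.cos δ) (hsin₁ : 0 ≤ Real.sin (h + δ)) (hsin₂ : 0 ≤ Real.sin (h - δ)) :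
    |δ| ≤ h := by
  have hlt : δ < π / 2 := by
    by_contra! hge
    exact hcos.not_ge (Real.cos_nonpos_of_pi_div_two_le_of_le hge (by linarith [hδ.2]))
  have hgt : -(π / 2) < δ := by
    by_contra! hle
    have := Real.cos_nonpos_of_pi_div_two_le_of_le (x := -δ) (by linarith) (by linarith [hδ.1])
    rw [Real.cos_neg] at this
    exact hcos.not_ge this
  rw [abs_le]
  constructor
  · by_contra! hlt'
    exact hsin₁.not_gt (Real.sin_neg_of_neg_of_neg_pi_lt (by linarith) (by linarith))
  · by_contra! hlt'
    exact hsin₂.not_gt (Real.sin_neg_of_neg_of_neg_pi_lt (by linarith) (by linarith))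

lemma mem_sector_of_forall_le_re {θ s T : ℝ} {w : ℂ} (hs₀ : 0 ≤ s) (hs : s < π) (hT : 0 < T)
    (h : ∀ (p : ℂ) (c : ℝ), (∀ z ∈ arc θ s, c ≤ (p * z).re) → c * T ≤ (p * w).re) :
    w ∈ sector θ s := by
  obtain ⟨δ, hδ, hw⟩ := exists_eq_norm_mul_exp_add_mem_Ioc w (θ + s / 2)
  -- Test `w` against three half-planes containing the arc: the two bounded by the lines through
  -- `0` at angles `θ` and `θ + s`, and `{z | cos (s / 2) ≤ Re (exp (-(θ + s / 2) I) z)}`.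
  have key : ∀ a c : ℝ, (∀ φ ∈ Icc θ (θ + s), c ≤ Real.cos (a + φ)) →
      c * T ≤ ‖w‖ * Real.cos (a + (θ + s / 2 + δ)) := by
    intro a c hc
    have := h (exp (a * I)) c (by rintro _ ⟨φ, hφ, rfl⟩; simpa only [re_exp_mul_exp] using hc φ hφ)
    rwa [hw, mul_left_comm, re_ofReal_mul, re_exp_mul_exp] at this
  have hcos : 0 < Real.cos (s / 2) := Real.cos_pos_of_mem_Ioo ⟨by linarith, by linarith⟩
  have h₁ := key (-(θ + s / 2)) (Real.cos (s / 2)) fun φ hφ => by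
    rw [← Real.cos_abs (_ + φ)]
    exact Real.cos_le_cos_of_nonneg_of_le_pi (abs_nonneg _) (by linarith)
      (abs_le.mpr ⟨by linarith [hφ.1], by linarith [hφ.2]⟩)
  have h₂ := key (-θ - π / 2) 0 fun φ hφ => by
    rw [show -θ - π / 2 + φ = (φ - θ) - π / 2 by ring, Real.cos_sub_pi_div_two]
    exact Real.sin_nonneg_of_nonneg_of_le_pi (by linarith [hφ.1]) (by linarith [hφ.2])
  have h₃ := key (π / 2 - θ - s) 0 fun φ hφ => by
    rw [show π / 2 - θ - s + φ = π / 2 - (θ + s - φ) by ring, Real.cos_pi_div_two_sub]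
    exact Real.sin_nonneg_of_nonneg_of_le_pi (by linarith [hφ.2]) (by linarith [hφ.1])
  rw [show -(θ + s / 2) + (θ + s / 2 + δ) = δ by ring] at h₁
  rw [show -θ - π / 2 + (θ + s / 2 + δ) = (s / 2 + δ) - π / 2 by ring,
    Real.cos_sub_pi_div_two, zero_mul] at h₂
  rw [show π / 2 - θ - s + (θ + s / 2 + δ) = π / 2 - (s / 2 - δ) by ring,
    Real.cos_pi_div_two_sub, zero_mul] at h₃
  have hpos : 0 < ‖w‖ * Real.cos δ := lt_of_lt_of_le (mul_pos hcos hT) h₁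
  have hr : 0 < ‖w‖ := (norm_nonneg w).lt_of_ne fun h0 => by simp [← h0] at hpos
  have hδs := abs_le_of_cos_pos_of_sin_nonneg hδ (by linarith) (by linarith)
    (pos_of_mul_pos_right hpos (norm_nonneg w))
    ((mul_nonneg_iff_of_pos_left hr).mp h₂) ((mul_nonneg_iff_of_pos_left hr).mp h₃)
  rw [abs_le] at hδs
  exact ⟨‖w‖, hr, θ + s / 2 + δ, ⟨by linarith, by linarith⟩, hw⟩

section Matrix

variable {ι : Type*} [Fintype ι]

lemma exists_mulVec_eq_smul_of_mem_spectrum [DecidableEq ι] {K : Type*} [Field K]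
    {A : Matrix ι ι K} {μ : K} (hμ : μ ∈ spectrum K A) : ∃ x ≠ 0, A *ᵥ x = μ • x := by
  rw [← spectrum_toLin', ← Module.End.hasEigenvalue_iff_mem_spectrum] at hμ
  obtain ⟨x, hx⟩ := hμ.exists_hasEigenvector
  exact ⟨x, hx.2, by simpa using hx.apply_eq_smul⟩

lemma star_star_dotProduct_mulVec (M : Matrix ι ι ℂ) (x : ι → ℂ) :
    star (star x ⬝ᵥ M *ᵥ x) = star x ⬝ᵥ star M *ᵥ x := by
  rw [star_dotProduct, star_mulVec, star_star, dotProduct_mulVec, star_eq_conjTranspose]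

variable [DecidableEq ι]

lemma spectrum_subset_arc_neg_pi {U : Matrix ι ι ℂ}
    (hU : U ∈ unitaryGroup ι ℂ) : spectrum ℂ U ⊆ arc (-π) (2 * π) := by
  intro z hz
  refine ⟨arg z, ⟨(neg_pi_lt_arg z).le, by linarith [arg_le_pi z]⟩, ?_⟩
  simpa [spectrum.norm_eq_one_of_unitary hU hz] using norm_mul_exp_arg_mul_I z

open scoped MatrixOrder in
lemma le_re_mul_dotProduct_mulVec (M : Matrix ι ι ℂ) [IsStarNormal M] {p : ℂ} {c : ℝ}
    (h : ∀ z ∈ spectrum ℂ M, c ≤ (p * z).re) (x : ι → ℂ) :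
    c * (star x ⬝ᵥ x).re ≤ (p * (star x ⬝ᵥ M *ᵥ x)).re := by
  have hcfc : cfc (fun z => p * z + star (p * z) - (2 * c : ℝ)) M
      = p • M + star (p • M) - algebraMap ℂ _ ((2 * c : ℝ) : ℂ) := by
    rw [cfc_sub .., cfc_add .., cfc_const_mul .., cfc_star .., cfc_const_mul .., cfc_id' ..,
      cfc_const ..]
  have hpsd : (p • M + star (p • M) - algebraMap ℂ _ ((2 * c : ℝ) : ℂ)).PosSemidef := by
    rw [← hcfc, ← nonneg_iff_posSemidef]
    refine cfc_nonneg fun z hz => ?_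
    rw [star_def, add_conj, ← ofReal_sub, zero_le_real]
    linarith [h z hz]
  have := hpsd.re_dotProduct_nonneg x
  rw [sub_mulVec, add_mulVec, dotProduct_sub, dotProduct_add, ← star_star_dotProduct_mulVec,
    Algebra.algebraMap_eq_smul_one] at this
  simp only [smul_mulVec, one_mulVec, dotProduct_smul, smul_eq_mul, RCLike.re_to_complex, sub_re,
    add_re, star_def, conj_re, re_ofReal_mul] at this
  linarith

lemma star_dotProduct_mulVec_mem_sector (M : Matrix ι ι ℂ) [IsStarNormal M] {θ s : ℝ}
    (hs₀ : 0 ≤ s) (hs : s < π) (hM : spectrum ℂ M ⊆ arc θ s) {x : ι → ℂ} (hx : x ≠ 0) :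
    star x ⬝ᵥ M *ᵥ x ∈ sector θ s :=
  mem_sector_of_forall_le_re hs₀ hs (pos_iff.mp (dotProduct_star_self_pos_iff.mpr hx)).1
    fun _ _ hc => le_re_mul_dotProduct_mulVec M (fun z hz => hc z (hM hz)) x

lemma spectrum_mul_subset_arc {A B : Matrix ι ι ℂ} (hA : A ∈ unitaryGroup ι ℂ)
    (hB : B ∈ unitaryGroup ι ℂ) {θ₁ θ₂ s t : ℝ} (hs : 0 ≤ s) (ht : 0 ≤ t) (hst : s + t < π)
    (hA' : spectrum ℂ A ⊆ arc θ₁ s) (hB' : spectrum ℂ B ⊆ arc θ₂ t) :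
    spectrum ℂ (A * B) ⊆ arc (θ₁ + θ₂) (s + t) := by
  have := isStarNormal_of_mem_unitary hA
  have := isStarNormal_of_mem_unitary hB
  intro μ hμ
  obtain ⟨x, hx, hABx⟩ := exists_mulVec_eq_smul_of_mem_spectrum hμ
  have hAx := star_dotProduct_mulVec_mem_sector A hs (by linarith) hA' hx
  have hBx := star_dotProduct_mulVec_mem_sector B ht (by linarith) hB' hx
  have hBx_eq : B *ᵥ x = μ • (star A *ᵥ x) :=
    calc B *ᵥ x = (star A * (A * B)) *ᵥ x := by
          rw [← mul_assoc, Unitary.star_mul_self_of_mem hA, one_mul]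
      _ = μ • (star A *ᵥ x) := by rw [← mulVec_mulVec, hABx, mulVec_smul]
  have hμ_eq : μ = (star x ⬝ᵥ B *ᵥ x) * (star (star x ⬝ᵥ A *ᵥ x))⁻¹ := by
    rw [hBx_eq, dotProduct_smul, smul_eq_mul, ← star_star_dotProduct_mulVec,
      mul_inv_cancel_right₀ (star_ne_zero.mpr (ne_zero_of_mem_sector hAx))]
  refine mem_arc_of_mem_sector ?_ (spectrum.norm_eq_one_of_unitary (mul_mem hA hB) hμ)
  rw [hμ_eq, add_comm θ₁, add_comm s]
  exact mul_mem_sector hBx (inv_star_mem_sector hAx)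

end Matrix

variable {n : ℕ}

lemma arcLength_eq_sInf (U : Matrix (Fin n) (Fin n) ℂ) :
    arcLength U = sInf {L | 0 ≤ L ∧ ∃ θ, spectrum ℂ U ⊆ arc θ L} := by
  simp only [arcLength, arc, subset_def, mem_image, mem_Icc, and_assoc, eq_comm]

lemma arcLength_nonneg (U : Matrix (Fin n) (Fin n) ℂ) : 0 ≤ arcLength U :=
  Real.sInf_nonneg fun _ hL => hL.1

lemma arcLength_le {U : Matrix (Fin n) (Fin n) ℂ} {θ L : ℝ} (hL : 0 ≤ L)
    (hU : spectrum ℂ U ⊆ arc θ L) : arcLength U ≤ L := by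
  rw [arcLength_eq_sInf]
  exact csInf_le ⟨0, fun _ hL' => hL'.1⟩ ⟨hL, θ, hU⟩

lemma exists_spectrum_subset_arc_of_arcLength_lt {U : Matrix (Fin n) (Fin n) ℂ}
    (hU : U ∈ unitaryGroup (Fin n) ℂ) {L : ℝ} (h : arcLength U < L) :
    ∃ θ, spectrum ℂ U ⊆ arc θ L := by
  rw [arcLength_eq_sInf] at h
  have hne : {L | 0 ≤ L ∧ ∃ θ, spectrum ℂ U ⊆ arc θ L}.Nonempty :=
    ⟨2 * π, by positivity, -π, spectrum_subset_arc_neg_pi hU⟩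
  obtain ⟨L', ⟨-, θ, hθ⟩, hL'⟩ := (csInf_lt_iff ⟨0, fun _ hL => hL.1⟩ hne).mp h
  exact ⟨θ, hθ.trans (image_mono (Icc_subset_Icc_right (by linarith)))⟩

lemma arcLength_mul_le_of_lt {A B : Matrix (Fin n) (Fin n) ℂ} (hA : A ∈ unitaryGroup (Fin n) ℂ)
    (hB : B ∈ unitaryGroup (Fin n) ℂ) {c : ℝ} (hc : arcLength A + arcLength B < c)
    (hcπ : c < π) : arcLength (A * B) ≤ c := by
  set d := (c - (arcLength A + arcLength B)) / 2 with hd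
  obtain ⟨θ₁, h₁⟩ := exists_spectrum_subset_arc_of_arcLength_lt hA (L := arcLength A + d)
    (by linarith [hd])
  obtain ⟨θ₂, h₂⟩ := exists_spectrum_subset_arc_of_arcLength_lt hB (L := arcLength B + d)
    (by linarith [hd])
  have hsum : arcLength A + d + (arcLength B + d) = c := by rw [hd]; ring
  have hAB := spectrum_mul_subset_arc hA hB (by linarith [arcLength_nonneg A])
    (by linarith [arcLength_nonneg B]) (by linarith) h₁ h₂
  rw [hsum] at hAB
  exact arcLength_le (by linarith [arcLength_nonneg A, arcLength_nonneg B]) hAB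

lemma phaseRange_nonneg (U : Matrix (Fin n) (Fin n) ℂ) : 0 ≤ phaseRange U :=
  le_min Real.pi_pos.le (arcLength_nonneg U)

lemma phaseRange_eq_arcLength_of_lt {U : Matrix (Fin n) (Fin n) ℂ} (h : phaseRange U < π) :
    phaseRange U = arcLength U :=
  min_eq_right (min_lt_iff.mp h |>.resolve_left (lt_irrefl π)).le

lemma phaseRange_mul_le {A B : Matrix (Fin n) (Fin n) ℂ} (hA : A ∈ unitaryGroup (Fin n) ℂ)
    (hB : B ∈ unitaryGroup (Fin n) ℂ) : phaseRange (A * B) ≤ phaseRange A + phaseRange B := by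
  rcases le_or_gt π (phaseRange A + phaseRange B) with hπ | hlt
  · exact (min_le_left _ _).trans hπ
  have hαA := phaseRange_eq_arcLength_of_lt (by linarith [phaseRange_nonneg B] : phaseRange A < π)
  have hαB := phaseRange_eq_arcLength_of_lt (by linarith [phaseRange_nonneg A] : phaseRange B < π)
  rw [hαA, hαB] at hlt ⊢
  refine le_of_forall_gt_imp_ge_of_dense fun c hc => ?_
  rcases le_or_gt π c with hcπ | hcπ
  · exact (min_le_left _ _).trans hcπ
  · exact (min_le_right _ _).trans (arcLength_mul_le_of_lt hA hB hc hcπ)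

end PhaseRange

open PhaseRange

/-- The quantity `α(U, V) := α(U† V)` satisfies the triangle inequality. -/
theorem phaseRange_triangle {n : ℕ} (U₁ U₂ U₃ : Matrix (Fin n) (Fin n) ℂ)
    (hU₁ : U₁ ∈ Matrix.unitaryGroup (Fin n) ℂ) (hU₂ : U₂ ∈ Matrix.unitaryGroup (Fin n) ℂ)
    (hU₃ : U₃ ∈ Matrix.unitaryGroup (Fin n) ℂ) :
    phaseRange (U₁ᴴ * U₃) ≤ phaseRange (U₁ᴴ * U₂) + phaseRange (U₂ᴴ * U₃) := by
  have hcancel : U₁ᴴ * U₂ * (U₂ᴴ * U₃) = U₁ᴴ * U₃ := by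
    rw [Matrix.mul_assoc, ← Matrix.mul_assoc U₂, ← star_eq_conjTranspose U₂,
      Unitary.mul_star_self_of_mem hU₂, Matrix.one_mul]
  rw [← hcancel, ← star_eq_conjTranspose, ← star_eq_conjTranspose]
  exact phaseRange_mul_le (mul_mem (Unitary.star_mem hU₁) hU₂) (mul_mem (Unitary.star_mem hU₂) hU₃)
end
end

section
/- For any unitary matrix U on a finite-dimensional complex Hilbert space, min over real φ of ‖U − e^{iφ} I‖ ≥ 2 sin(α(U)/4), where I is the identity matrix. -/
/-! Write an eigenvalue `z` of `U` as `e^{i(φ + ψ)}` with `|ψ| ≤ π`. The chord `|z - e^{iφ}|` equals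
`2 sin (|ψ| / 2)`, and it is at most `r = ‖U - e^{iφ} I‖` because `z - e^{iφ}` is an eigenvalue of
`U - e^{iφ} I`. So every eigenvalue lies within angle `2 arcsin (r / 2)` of `e^{iφ}`, whence
`α(U) ≤ α̃(U) ≤ 4 arcsin (r / 2)`; as `α(U) / 4 ≤ π / 4`, this is `2 sin (α(U) / 4) ≤ r`. -/

open Matrix
open scoped Matrix.Norms.L2Operator Kronecker ComplexOrder

noncomputable section

open Complex Real in
theorem two_arcsin_half_norm_exp_mul_I_sub_one {t : ℝ} (ht : |t| ≤ π) :
    2 * arcsin (‖exp (t * I) - 1‖ / 2) = |t| := by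
  have hsin : |Real.sin (t / 2)| = Real.sin (|t| / 2) := by
    rw [abs_sin_eq_sin_abs_of_abs_le_pi (by rw [abs_div]; linarith [abs_nonneg t, pi_pos]),
      abs_div, abs_two]
  rw [mul_comm (t : ℂ), norm_exp_I_mul_ofReal_sub_one, norm_mul, Real.norm_two, Real.norm_eq_abs,
    hsin, mul_div_cancel_left₀ _ two_ne_zero,
    arcsin_sin (by linarith [abs_nonneg t, pi_pos]) (by linarith)]
  ring

open Complex Real in
theorem exists_eq_exp_mul_I_abs_eq_two_arcsin {z : ℂ} (hz : ‖z‖ = 1) (φ : ℝ) :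
    ∃ ψ : ℝ, z = exp ((φ + ψ : ℝ) * I) ∧ |ψ| = 2 * arcsin (‖z - exp (φ * I)‖ / 2) := by
  set w := z * exp ((-φ : ℝ) * I)
  have hw : exp (arg w * I) = w := by
    have := norm_mul_exp_arg_mul_I w
    rwa [norm_mul, hz, norm_exp_ofReal_mul_I, one_mul, ofReal_one, one_mul] at this
  have hzw : z = exp (φ * I) * w := by
    rw [mul_left_comm, ← Complex.exp_add, ofReal_neg, neg_mul, add_neg_cancel, Complex.exp_zero,
      mul_one]
  have hdist : ‖z - exp (φ * I)‖ = ‖exp (arg w * I) - 1‖ := by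
    rw [hw, hzw, ← mul_sub_one, norm_mul, norm_exp_ofReal_mul_I, one_mul]
  refine ⟨arg w, ?_, ?_⟩
  · rw [ofReal_add, add_mul, Complex.exp_add, hw, hzw]
  · rw [hdist, two_arcsin_half_norm_exp_mul_I_sub_one (abs_arg_le_pi w)]

theorem spectrum.norm_sub_le_norm_sub_smul_one {A : Type*} [NormedRing A] [NormedAlgebra ℂ A]
    [CompleteSpace A] [NormOneClass A] {a : A} {z : ℂ} (hz : z ∈ spectrum ℂ a) (c : ℂ) :
    ‖z - c‖ ≤ ‖a - c • 1‖ := by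
  rw [← Algebra.algebraMap_eq_smul_one]
  exact spectrum.norm_le_norm_of_mem (spectrum.sub_singleton_eq a c ▸ Set.sub_mem_sub hz rfl)

theorem Matrix.nonempty_of_mem_spectrum {ι R : Type*} [Fintype ι] [DecidableEq ι] [CommRing R]
    {U : Matrix ι ι R} {z : R} (hz : z ∈ spectrum R U) : Nonempty ι := by
  rcases isEmpty_or_nonempty ι with h | h
  · simp [spectrum.of_subsingleton] at hz
  · exact h

section PhaseRange

variable {n : ℕ} (U : Matrix (Fin n) (Fin n) ℂ)

theorem arcLength_nonneg : 0 ≤ arcLength U :=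
  Real.sInf_nonneg fun _ hL => hL.1

theorem phaseRange_nonneg : 0 ≤ phaseRange U :=
  le_min Real.pi_pos.le (arcLength_nonneg U)

theorem phaseRange_le_pi : phaseRange U ≤ Real.pi :=
  min_le_left _ _

theorem phaseRange_le_arcLength : phaseRange U ≤ arcLength U :=
  min_le_right _ _

variable {U}

theorem arcLength_le_two_mul_of_forall_mem_spectrum {φ ρ : ℝ} (hρ : 0 ≤ ρ)
    (h : ∀ z ∈ spectrum ℂ U, ∃ ψ : ℝ, |ψ| ≤ ρ ∧ z = Complex.exp ((φ + ψ : ℝ) * Complex.I)) :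
    arcLength U ≤ 2 * ρ := by
  refine csInf_le ⟨0, fun _ hL => hL.1⟩ ⟨by positivity, φ - ρ, fun z hz => ?_⟩
  obtain ⟨ψ, hψ, rfl⟩ := h z hz
  refine ⟨φ + ψ, ?_, ?_, rfl⟩ <;> linarith [abs_le.1 hψ]

open Real in
theorem arcLength_le_four_mul_arcsin (hU : U ∈ Matrix.unitaryGroup (Fin n) ℂ) (φ : ℝ) :
    arcLength U ≤ 4 * arcsin (‖U - Complex.exp (φ * Complex.I) • 1‖ / 2) := by
  set r := ‖U - Complex.exp (φ * Complex.I) • 1‖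
  have hr : 0 ≤ arcsin (r / 2) := arcsin_nonneg.2 (div_nonneg (norm_nonneg _) two_pos.le)
  have := arcLength_le_two_mul_of_forall_mem_spectrum (φ := φ) (ρ := 2 * arcsin (r / 2))
    (by positivity) fun z hz => by
    have := Matrix.nonempty_of_mem_spectrum hz
    obtain ⟨ψ, hzψ, hψ⟩ :=
      exists_eq_exp_mul_I_abs_eq_two_arcsin (spectrum.norm_eq_one_of_unitary hU hz) φ
    refine ⟨ψ, ?_, hzψ⟩
    rw [hψ]
    gcongr
    exact spectrum.norm_sub_le_norm_sub_smul_one hz _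
  linarith

end PhaseRange

open Real in
/-- `min_φ ‖U - e^{iφ} I‖ ≥ 2 sin(α(U)/4)` for a unitary `U`. -/
theorem two_sin_le_norm_sub_phase {n : ℕ} (U : Matrix (Fin n) (Fin n) ℂ)
    (hU : U ∈ Matrix.unitaryGroup (Fin n) ℂ) (φ : ℝ) :
    2 * Real.sin (phaseRange U / 4) ≤
      ‖U - Complex.exp (φ * Complex.I) • (1 : Matrix (Fin n) (Fin n) ℂ)‖ := by
  have hα : phaseRange U / 4 ≤ arcsin (‖U - Complex.exp (φ * Complex.I) • 1‖ / 2) := by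
    linarith [phaseRange_le_arcLength U, arcLength_le_four_mul_arcsin hU φ]
  have hα_mem : phaseRange U / 4 ∈ Set.Ioc (-(π / 2)) (π / 2) := by
    constructor <;> linarith [phaseRange_le_pi U, phaseRange_nonneg U, pi_pos]
  linarith [(le_arcsin_iff_sin_le' hα_mem).1 hα]
end
end

section
/- For any unitary matrices U and V on the same finite-dimensional complex Hilbert space, |α(U) − α(V)| ≤ π · ‖U − V‖. -/
open Matrix
open scoped Matrix.Norms.L2Operator Kronecker ComplexOrder

noncomputable section

/-!
If `U` is normal, the resolvent `(μ - U)⁻¹` has norm `1 / dist(μ, σ(U))`, so every eigenvalue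
of `V` lies within `‖U - V‖` of `σ(U)`. On the unit circle a chord of length `d` subtends an arc
of length at most `π d / 2` (Jordan's inequality `sin x ≥ 2x/π`), so widening an arc that covers
`σ(U)` by `π ‖U - V‖ / 2` at both ends yields an arc covering `σ(V)`. Thus `α̃` is
`π`-Lipschitz in the operator norm, and so is `α = min π α̃`.
-/

open Metric

namespace IsStarNormal

variable {A : Type*} [CStarAlgebra A]

theorem norm_ringInverse_algebraMap_sub_le (a : A) [IsStarNormal a] {μ : ℂ}
    (hμ : 0 < infDist μ (spectrum ℂ a)) :
    ‖Ring.inverse (algebraMap ℂ A μ - a)‖ ≤ (infDist μ (spectrum ℂ a))⁻¹ := by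
  have hne : ∀ z ∈ spectrum ℂ a, μ - z ≠ 0 := fun z hz h => by
    rw [sub_eq_zero.mp h, infDist_zero_of_mem hz] at hμ
    exact hμ.false
  have hcfc : cfc (fun z => μ - z) a = algebraMap ℂ A μ - a := by
    rw [cfc_sub .., cfc_const .., cfc_id' ..]
  rw [← hcfc, ← cfc_inv _ a hne]
  refine norm_cfc_le (by positivity) fun z hz => ?_
  rw [norm_inv, ← dist_eq_norm]
  exact inv_anti₀ hμ (infDist_le_dist_of_mem hz)

theorem infDist_spectrum_le_norm_sub {a b : A} [IsStarNormal a] {μ : ℂ}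
    (hμ : μ ∈ spectrum ℂ b) : infDist μ (spectrum ℂ a) ≤ ‖a - b‖ := by
  nontriviality A
  by_contra! h
  have hpos : 0 < infDist μ (spectrum ℂ a) := (norm_nonneg _).trans_lt h
  have hunit : IsUnit (algebraMap ℂ A μ - a) := by
    by_contra hμa
    exact hpos.ne' (infDist_zero_of_mem (spectrum.mem_iff.mpr hμa))
  have hinv : ‖(↑hunit.unit⁻¹ : A)‖ ≤ (infDist μ (spectrum ℂ a))⁻¹ := by
    simpa [← Ring.inverse_unit] using norm_ringInverse_algebraMap_sub_le a hpos
  have hclose : ‖(algebraMap ℂ A μ - b) - hunit.unit‖ < ‖(↑hunit.unit⁻¹ : A)‖⁻¹ :=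
    calc ‖(algebraMap ℂ A μ - b) - hunit.unit‖ = ‖a - b‖ := by simp
      _ < infDist μ (spectrum ℂ a) := h
      _ ≤ ‖(↑hunit.unit⁻¹ : A)‖⁻¹ := le_inv_of_le_inv₀ (Units.norm_pos _) hinv
  exact hμ (hunit.unit.ofNearby _ hclose).isUnit

theorem exists_mem_spectrum_dist_le_norm_sub {a b : A} [IsStarNormal a] {μ : ℂ}
    (hμ : μ ∈ spectrum ℂ b) : ∃ ν ∈ spectrum ℂ a, dist μ ν ≤ ‖a - b‖ := by
  rcases subsingleton_or_nontrivial A with _ | _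
  · simp [spectrum.of_subsingleton] at hμ
  obtain ⟨ν, hν, hdist⟩ :=
    (spectrum.isCompact a).exists_infDist_eq_dist (spectrum.nonempty a) μ
  exact ⟨ν, hν, hdist ▸ infDist_spectrum_le_norm_sub hμ⟩

end IsStarNormal

open Real Complex

theorem norm_exp_mul_I_sub_exp_mul_I (a b : ℝ) :
    ‖exp (a * I) - exp (b * I)‖ = ‖exp (I * ↑(a - b)) - 1‖ := by
  rw [← one_mul ‖exp (I * _) - 1‖, ← norm_exp_ofReal_mul_I b, ← norm_mul, mul_sub, mul_one,
    ← Complex.exp_add]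
  push_cast
  ring_nf

theorem abs_le_pi_div_two_mul_norm_exp_I_mul_sub_one {t : ℝ} (ht : |t| ≤ π) :
    |t| ≤ π / 2 * ‖exp (I * t) - 1‖ := by
  rw [norm_exp_I_mul_ofReal_sub_one, norm_mul, Real.norm_eq_abs, Real.norm_eq_abs, abs_two]
  have hjordan := mul_abs_le_abs_sin (x := t / 2) (by rw [abs_div, abs_two]; linarith)
  rw [abs_div, abs_two] at hjordan
  calc |t| = π / 2 * (2 * (2 / π * (|t| / 2))) := by field_simp
    _ ≤ π / 2 * (2 * |Real.sin (t / 2)|) := by gcongr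

theorem exists_exp_mul_I_eq_and_abs_sub_le (a b : ℝ) :
    ∃ ψ : ℝ, exp (ψ * I) = exp (a * I) ∧ |ψ - b| ≤ π / 2 * ‖exp (a * I) - exp (b * I)‖ := by
  set t := ((a - b : ℝ) : Angle).toReal
  obtain ⟨k, hk⟩ := Angle.angle_eq_iff_two_pi_dvd_sub.mp (Angle.coe_toReal ((a - b : ℝ) : Angle))
  have hexp : exp (I * t) = exp (I * ↑(a - b)) := by
    refine exp_eq_exp_iff_exists_int.mpr ⟨k, ?_⟩
    rw [show t = a - b + 2 * π * k by linarith]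
    push_cast
    ring
  refine ⟨b + t, ?_, ?_⟩
  · rw [show ((b + t : ℝ) : ℂ) * I = b * I + I * t by push_cast; ring, Complex.exp_add, hexp,
      ← Complex.exp_add]
    congr 1
    push_cast
    ring
  · rw [add_sub_cancel_left, norm_exp_mul_I_sub_exp_mul_I, ← hexp]
    exact abs_le_pi_div_two_mul_norm_exp_I_mul_sub_one (Angle.abs_toReal_le_pi _)

theorem exp_arg_mul_I_of_mem_sphere {z : ℂ} (hz : z ∈ sphere (0 : ℂ) 1) :
    exp (arg z * I) = z := by
  simpa [mem_sphere_zero_iff_norm.mp hz] using norm_mul_exp_arg_mul_I z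

/-- The set in the definition of `arcLength U` is
`{L | 0 ≤ L ∧ ∃ θ, ArcCovers (spectrum ℂ U) θ L}`. -/
def ArcCovers (S : Set ℂ) (θ L : ℝ) : Prop :=
  ∀ z ∈ S, ∃ φ : ℝ, θ ≤ φ ∧ φ ≤ θ + L ∧ z = exp (φ * I)

theorem arcCovers_of_subset_sphere {S : Set ℂ} (hS : S ⊆ sphere 0 1) :
    ArcCovers S (-π) (2 * π) := fun z hz =>
  ⟨arg z, (neg_pi_lt_arg z).le, by linarith [arg_le_pi z],
    (exp_arg_mul_I_of_mem_sphere (hS hz)).symm⟩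

theorem ArcCovers.thicken {S T : Set ℂ} {θ L ε : ℝ} (h : ArcCovers S θ L)
    (hT : T ⊆ sphere 0 1) (hTS : ∀ z ∈ T, ∃ w ∈ S, dist z w ≤ ε) :
    ArcCovers T (θ - π / 2 * ε) (L + π * ε) := by
  intro z hz
  obtain ⟨w, hw, hdist⟩ := hTS z hz
  obtain ⟨φ, hθφ, hφL, rfl⟩ := h w hw
  obtain ⟨ψ, hψ, hψφ⟩ := exists_exp_mul_I_eq_and_abs_sub_le (arg z) φ
  rw [exp_arg_mul_I_of_mem_sphere (hT hz)] at hψ hψφ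
  rw [← dist_eq_norm] at hψφ
  have hclose : |ψ - φ| ≤ π / 2 * ε := hψφ.trans (by gcongr)
  rw [abs_le] at hclose
  exact ⟨ψ, by linarith, by linarith, hψ.symm⟩

theorem arcLength_le_add_pi_mul_norm_sub {n : ℕ} {U V : Matrix (Fin n) (Fin n) ℂ}
    (hU : U ∈ unitaryGroup (Fin n) ℂ) (hV : V ∈ unitaryGroup (Fin n) ℂ) :
    arcLength V ≤ arcLength U + π * ‖U - V‖ := by
  have : IsStarNormal U := isStarNormal_of_mem_unitary hU
  rw [← sub_le_iff_le_add]
  refine le_csInf ⟨2 * π, two_pi_pos.le, -π,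
    arcCovers_of_subset_sphere (spectrum.subset_circle_of_unitary hU)⟩ ?_
  rintro L ⟨hL, θ, hθ⟩
  rw [sub_le_iff_le_add]
  exact csInf_le ⟨0, fun _ h => h.1⟩ ⟨by positivity, _,
    ArcCovers.thicken hθ (spectrum.subset_circle_of_unitary hV)
      fun _ hz => IsStarNormal.exists_mem_spectrum_dist_le_norm_sub hz⟩

/-- `|α(U) - α(V)| ≤ π ‖U - V‖` for unitaries `U, V`. -/
theorem abs_phaseRange_sub_le {n : ℕ} (U V : Matrix (Fin n) (Fin n) ℂ)
    (hU : U ∈ Matrix.unitaryGroup (Fin n) ℂ) (hV : V ∈ Matrix.unitaryGroup (Fin n) ℂ) :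
    |phaseRange U - phaseRange V| ≤ Real.pi * ‖U - V‖ := by
  have hVU := arcLength_le_add_pi_mul_norm_sub hU hV
  have hUV := arcLength_le_add_pi_mul_norm_sub hV hU
  rw [norm_sub_rev] at hUV
  calc |phaseRange U - phaseRange V| ≤ max |π - π| |arcLength U - arcLength V| :=
        abs_min_sub_min_le_max _ _ _ _
    _ = |arcLength U - arcLength V| := by simp
    _ ≤ π * ‖U - V‖ := abs_sub_le_iff.mpr ⟨by linarith, by linarith⟩
end
end

section
/- Let U₁, …, U_m and V₁, …, V_m be unitary matrices on the same finite-dimensional complex Hilbert space. Then |α(U_m ⋯ U₂ U₁) − α(V_m ⋯ V₂ V₁)| ≤ π · Σ_{i=1}^{m} ‖U_i − V_i‖; that is, the error in the phase range of a circuit is at most π times the sum of the operator-norm errors of its individual gates. -/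
open Matrix
open scoped Matrix.Norms.L2Operator Kronecker ComplexOrder

noncomputable section

/-! Since `min π` is 1-Lipschitz, it suffices to bound `|α̃(A) - α̃(B)|` by `π ‖A - B‖` for
unitaries `A`, `B`, and to telescope `‖∏ Uᵢ - ∏ Vᵢ‖ ≤ ∑ ‖Uᵢ - Vᵢ‖`, unitaries being isometries.
For normal `A` the resolvent `(z - A)⁻¹` has norm `1 / dist(z, σ(A))`, so every eigenvalue of `B`
lies within `‖A - B‖` of an eigenvalue of `A`. By Jordan's inequality `sin x ≥ 2x/π`, two points of
the unit circle at distance `ε` differ in angle by at most `π ε / 2`; hence an arc containing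
`σ(B)`, widened by `π ε / 2` at both ends, contains `σ(A)`. -/

open Real

section Perturbation

variable {A : Type*} [CStarAlgebra A]

lemma IsStarNormal.notMem_spectrum_of_norm_sub_lt {a b : A} [IsStarNormal a] {z : ℂ} {d : ℝ}
    (hd : ∀ w ∈ spectrum ℂ a, d ≤ ‖z - w‖) (hab : ‖a - b‖ < d) : z ∉ spectrum ℂ b := by
  nontriviality A
  have hd₀ : 0 < d := (norm_nonneg _).trans_lt hab
  have hne : ∀ w ∈ spectrum ℂ a, z - w ≠ 0 := fun w hw h ↦ by
    have := hd w hw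
    rw [h, norm_zero] at this
    linarith
  set u := cfcUnits (fun w ↦ z - w) a hne
  have hu : (u : A) = algebraMap ℂ A z - a := by
    change cfc (fun w ↦ z - w) a = _
    rw [cfc_sub .., cfc_const z a, cfc_id' ℂ a]
  have hu_inv : ‖(↑u⁻¹ : A)‖ ≤ d⁻¹ := by
    change ‖cfc (fun w ↦ (z - w)⁻¹) a‖ ≤ d⁻¹
    refine norm_cfc_le (by positivity) fun w hw ↦ ?_
    rw [norm_inv]
    exact inv_anti₀ hd₀ (hd w hw)
  have hclose : ‖(algebraMap ℂ A z - b) - u‖ < ‖(↑u⁻¹ : A)‖⁻¹ := by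
    rw [hu, sub_sub_sub_cancel_left]
    exact hab.trans_le (le_inv_of_le_inv₀ (Units.norm_pos _) hu_inv)
  exact spectrum.notMem_iff.mpr (u.ofNearby _ hclose).isUnit

lemma IsStarNormal.exists_mem_spectrum_norm_sub_le {a b : A} [IsStarNormal a] {z : ℂ}
    (hz : z ∈ spectrum ℂ b) : ∃ w ∈ spectrum ℂ a, ‖z - w‖ ≤ ‖a - b‖ := by
  rcases subsingleton_or_nontrivial A with _ | _
  · simp [spectrum.of_subsingleton] at hz
  obtain ⟨w, hw, hmin⟩ := (spectrum.isCompact a).exists_isMinOn (spectrum.nonempty a)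
    (continuous_const.sub continuous_id).norm.continuousOn
  exact ⟨w, hw, not_lt.mp fun h ↦ notMem_spectrum_of_norm_sub_lt (fun v hv ↦ hmin hv) h hz⟩

end Perturbation

section Telescope

variable {E : Type*} [NormedRing E] [StarRing E] [CStarRing E]

lemma norm_mul_sub_mul_le_of_mem_unitary {a b c d : E} (hb : b ∈ unitary E) (hc : c ∈ unitary E) :
    ‖a * b - c * d‖ ≤ ‖a - c‖ + ‖b - d‖ := calc
  ‖a * b - c * d‖ = ‖(a - c) * b + c * (b - d)‖ := by noncomm_ring
  _ ≤ ‖(a - c) * b‖ + ‖c * (b - d)‖ := norm_add_le _ _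
  _ = ‖a - c‖ + ‖b - d‖ := by
    rw [CStarRing.norm_mul_mem_unitary _ hb, CStarRing.norm_mem_unitary_mul _ hc]

lemma norm_prod_reverse_ofFn_sub_prod_reverse_ofFn_le {m : ℕ} (u v : Fin m → E)
    (hu : ∀ i, u i ∈ unitary E) (hv : ∀ i, v i ∈ unitary E) :
    ‖(List.ofFn u).reverse.prod - (List.ofFn v).reverse.prod‖ ≤ ∑ i, ‖u i - v i‖ := by
  induction m with
  | zero => simp
  | succ m ih =>
    have hv' : (List.ofFn fun i : Fin m ↦ v i.succ).reverse.prod ∈ unitary E :=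
      Submonoid.list_prod_mem _ (by simpa using fun i : Fin m ↦ hv i.succ)
    simp only [List.ofFn_succ, List.reverse_cons, List.prod_append, List.prod_singleton,
      Fin.sum_univ_succ]
    calc _ ≤ _ := norm_mul_sub_mul_le_of_mem_unitary (hu 0) hv'
      _ ≤ _ := by
        rw [add_comm]
        gcongr
        exact ih _ _ (fun i ↦ hu i.succ) (fun i ↦ hv i.succ)

end Telescope

namespace Complex

lemma exp_arg_mul_I_of_norm_eq_one {z : ℂ} (hz : ‖z‖ = 1) : exp (arg z * I) = z := by
  simpa [hz] using norm_mul_exp_arg_mul_I z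

lemma abs_arg_le_pi_div_two_mul_norm_sub_one {z : ℂ} (hz : ‖z‖ = 1) :
    |arg z| ≤ π / 2 * ‖z - 1‖ := by
  have hsin : 2 / π * |arg z / 2| ≤ |Real.sin (arg z / 2)| :=
    mul_abs_le_abs_sin (by rw [abs_div, abs_two]; linarith [abs_arg_le_pi z])
  have hchord : ‖z - 1‖ = 2 * |Real.sin (arg z / 2)| := by
    conv_lhs => rw [← exp_arg_mul_I_of_norm_eq_one hz, mul_comm]
    rw [norm_exp_I_mul_ofReal_sub_one, norm_mul, norm_two, Real.norm_eq_abs]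
  rw [hchord]
  rw [abs_div, abs_two] at hsin
  have := pi_pos
  field_simp at hsin ⊢
  linarith

lemma exists_exp_mul_I_eq_abs_sub_le {z : ℂ} (hz : ‖z‖ = 1) (ψ : ℝ) :
    ∃ φ : ℝ, exp (φ * I) = z ∧ |φ - ψ| ≤ π / 2 * ‖z - exp (ψ * I)‖ := by
  set w := exp (ψ * I)
  have hw : ‖w‖ = 1 := norm_exp_ofReal_mul_I ψ
  have hzw : ‖z / w‖ = 1 := by rw [norm_div, hz, hw, div_one]
  refine ⟨ψ + arg (z / w), ?_, ?_⟩
  · rw [ofReal_add, add_mul, exp_add, exp_arg_mul_I_of_norm_eq_one hzw, mul_div_cancel₀]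
    exact exp_ne_zero _
  · rw [add_sub_cancel_left]
    calc |arg (z / w)| ≤ π / 2 * ‖z / w - 1‖ := abs_arg_le_pi_div_two_mul_norm_sub_one hzw
      _ = π / 2 * ‖z - w‖ := by rw [div_sub_one (exp_ne_zero _), norm_div, hw, div_one]

end Complex

/-- `arcLength U` is by definition `sInf (arcLengths (spectrum ℂ U))`. -/
def arcLengths (S : Set ℂ) : Set ℝ :=
  { L : ℝ | 0 ≤ L ∧ ∃ θ : ℝ, ∀ z ∈ S, ∃ φ : ℝ,
    θ ≤ φ ∧ φ ≤ θ + L ∧ z = Complex.exp (φ * Complex.I) }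

section ArcLengths

variable {S T : Set ℂ}

lemma two_pi_mem_arcLengths (hS : S ⊆ Metric.sphere 0 1) : 2 * π ∈ arcLengths S := by
  refine ⟨by positivity, -π, fun z hz ↦ ⟨Complex.arg z, (Complex.neg_pi_lt_arg z).le, ?_, ?_⟩⟩
  · linarith [Complex.arg_le_pi z]
  · exact (Complex.exp_arg_mul_I_of_norm_eq_one (mem_sphere_zero_iff_norm.mp (hS hz))).symm

lemma add_mem_arcLengths_of_forall_exists_norm_sub_le (hS : S ⊆ Metric.sphere 0 1) {ε L : ℝ}
    (hε : 0 ≤ ε) (hST : ∀ z ∈ S, ∃ w ∈ T, ‖z - w‖ ≤ ε) (hL : L ∈ arcLengths T) :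
    L + π * ε ∈ arcLengths S := by
  obtain ⟨hL₀, θ, hθ⟩ := hL
  refine ⟨by positivity, θ - π * ε / 2, fun z hz ↦ ?_⟩
  obtain ⟨w, hw, hzw⟩ := hST z hz
  obtain ⟨ψ, hθψ, hψθ, rfl⟩ := hθ w hw
  obtain ⟨φ, rfl, hφψ⟩ :=
    Complex.exists_exp_mul_I_eq_abs_sub_le (mem_sphere_zero_iff_norm.mp (hS hz)) ψ
  have : |φ - ψ| ≤ π * ε / 2 := hφψ.trans (by rw [mul_div_right_comm]; gcongr)
  rw [abs_sub_le_iff] at this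
  exact ⟨φ, by linarith, by linarith, rfl⟩

lemma sInf_arcLengths_le_add (hS : S ⊆ Metric.sphere 0 1) (hT : T ⊆ Metric.sphere 0 1) {ε : ℝ}
    (hε : 0 ≤ ε) (hST : ∀ z ∈ S, ∃ w ∈ T, ‖z - w‖ ≤ ε) :
    sInf (arcLengths S) ≤ sInf (arcLengths T) + π * ε := by
  rw [← sub_le_iff_le_add]
  refine le_csInf ⟨_, two_pi_mem_arcLengths hT⟩ fun L hL ↦ sub_le_iff_le_add.mpr ?_
  exact csInf_le ⟨0, fun _ h ↦ h.1⟩ (add_mem_arcLengths_of_forall_exists_norm_sub_le hS hε hST hL)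

end ArcLengths

section PhaseRange

variable {n : ℕ} {A B : Matrix (Fin n) (Fin n) ℂ}

lemma arcLength_le_add_pi_mul_norm_sub_s15 (hA : A ∈ unitary (Matrix (Fin n) (Fin n) ℂ))
    (hB : B ∈ unitary (Matrix (Fin n) (Fin n) ℂ)) :
    arcLength A ≤ arcLength B + π * ‖A - B‖ := by
  have := isStarNormal_of_mem_unitary hB
  refine sInf_arcLengths_le_add (spectrum.subset_circle_of_unitary hA)
    (spectrum.subset_circle_of_unitary hB) (norm_nonneg _) fun z hz ↦ ?_
  obtain ⟨w, hw, hzw⟩ := IsStarNormal.exists_mem_spectrum_norm_sub_le (a := B) hz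
  exact ⟨w, hw, hzw.trans_eq (norm_sub_rev _ _)⟩

lemma abs_phaseRange_sub_le_s15 (hA : A ∈ unitary (Matrix (Fin n) (Fin n) ℂ))
    (hB : B ∈ unitary (Matrix (Fin n) (Fin n) ℂ)) :
    |phaseRange A - phaseRange B| ≤ π * ‖A - B‖ := by
  have h₁ := arcLength_le_add_pi_mul_norm_sub_s15 hA hB
  have h₂ := arcLength_le_add_pi_mul_norm_sub_s15 hB hA
  rw [norm_sub_rev] at h₂
  refine (abs_min_sub_min_le_max _ _ _ _).trans ?_
  rw [sub_self, abs_zero]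
  exact max_le (by positivity) (abs_sub_le_iff.mpr ⟨by linarith, by linarith⟩)

end PhaseRange

/-- The error in the phase range of a circuit is at most `π` times the sum of the
operator-norm errors of its individual gates: for unitaries `U i`, `V i`,
`|α(U_m ⋯ U₁) - α(V_m ⋯ V₁)| ≤ π ∑ᵢ ‖U i - V i‖`. -/
theorem abs_phaseRange_prod_sub_le {n m : ℕ}
    (U V : Fin m → Matrix (Fin n) (Fin n) ℂ)
    (hU : ∀ i, U i ∈ Matrix.unitaryGroup (Fin n) ℂ)
    (hV : ∀ i, V i ∈ Matrix.unitaryGroup (Fin n) ℂ) :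
    |phaseRange ((List.ofFn U).reverse.prod) - phaseRange ((List.ofFn V).reverse.prod)| ≤
      Real.pi * ∑ i, ‖U i - V i‖ := by
  have hprod {W : Fin m → Matrix (Fin n) (Fin n) ℂ}
      (hW : ∀ i, W i ∈ Matrix.unitaryGroup (Fin n) ℂ) :
      (List.ofFn W).reverse.prod ∈ unitary (Matrix (Fin n) (Fin n) ℂ) :=
    Submonoid.list_prod_mem _ (by simpa using hW)
  calc _ ≤ π * ‖(List.ofFn U).reverse.prod - (List.ofFn V).reverse.prod‖ :=
        abs_phaseRange_sub_le_s15 (hprod hU) (hprod hV)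
    _ ≤ π * ∑ i, ‖U i - V i‖ := by
        gcongr
        exact norm_prod_reverse_ofFn_sub_prod_reverse_ofFn_le U V hU hV
end
end
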